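/- arXiv:1908.00779 — 2 statements merged into one kernel-verified Lean document; each statement's English description precedes it below -/
import Mathlib

section
/- Let F : C → D, G : D → E and H : E → E' be composable functors between relative categories such that F, G, H, G∘F, H∘G and H∘G∘F all admit total left derived functors; fix total left derived functors (LF, τ_F), (LG, τ_G), (LH, τ_H), (L(GF), τ_{GF}), (L(HG), τ_{HG}) and (L(HGF), τ_{HGF}). For each composable pair let td⟨G,F⟩ : LG ∘ LF ⟹ L(GF) denote the unique natural transformation satisfying τ_{GF} ∘ (td⟨G,F⟩ ★ γ_C) = (τ_G ★ F) ∘ (LG ★ τ_F), and define td⟨H,G⟩, td⟨HG,F⟩ and td⟨H,GF⟩ by the analogous equations. Then td⟨HG,F⟩ ∘ (td⟨H,G⟩ ★ LF) = td⟨H,GF⟩ ∘ (LH ★ td⟨G,F⟩) as natural transformations LH ∘ LG ∘ LF ⟹ L(HGF). -/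
open CategoryTheory

universe v₁ v₂ v₃ v₄ v₅ v₆ v₇ v₈ u₁ u₂ u₃ u₄ u₅ u₆ u₇ u₈

/-- (Cocycle coherence of the comparison transformations between total
left derived functors.)  Given composable functors `F : C ⥤ D`, `G : D ⥤ E`,
`H : E ⥤ E'` between relative categories such that `F`, `G`, `H`, `G ∘ F`, `H ∘ G` and
`H ∘ G ∘ F` admit total left derived functors, and given the canonical comparison
transformations `td⟨G,F⟩ : LG ∘ LF ⟹ L(GF)` etc. (each characterized by the equation
`τ ∘ (td ★ γ) = (τ' ★ -) ∘ (L ★ τ'')`), one has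
`td⟨HG,F⟩ ∘ (td⟨H,G⟩ ★ LF) = td⟨H,GF⟩ ∘ (LH ★ td⟨G,F⟩)`. -/
theorem totalLeftDerived_comparison_cocycle
    {C : Type u₁} [Category.{v₁} C] {D : Type u₂} [Category.{v₂} D]
    {E : Type u₃} [Category.{v₃} E] {E' : Type u₄} [Category.{v₄} E']
    (WC : MorphismProperty C) (WD : MorphismProperty D)
    (WE : MorphismProperty E) (WE' : MorphismProperty E')
    {HoC : Type u₅} [Category.{v₅} HoC] {HoD : Type u₆} [Category.{v₆} HoD]
    {HoE : Type u₇} [Category.{v₇} HoE] {HoE' : Type u₈} [Category.{v₈} HoE']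
    (γC : C ⥤ HoC) (γD : D ⥤ HoD) (γE : E ⥤ HoE) (γE' : E' ⥤ HoE')
    [γC.IsLocalization WC] [γD.IsLocalization WD]
    [γE.IsLocalization WE] [γE'.IsLocalization WE']
    (F : C ⥤ D) (G : D ⥤ E) (H : E ⥤ E')
    -- total left derived functors of F, G, H, G∘F, H∘G and H∘G∘F
    (LF : HoC ⥤ HoD) (τF : γC ⋙ LF ⟶ F ⋙ γD) [LF.IsRightKanExtension τF]
    (LG : HoD ⥤ HoE) (τG : γD ⋙ LG ⟶ G ⋙ γE) [LG.IsRightKanExtension τG]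
    (LH : HoE ⥤ HoE') (τH : γE ⋙ LH ⟶ H ⋙ γE') [LH.IsRightKanExtension τH]
    (LGF : HoC ⥤ HoE) (τGF : γC ⋙ LGF ⟶ (F ⋙ G) ⋙ γE) [LGF.IsRightKanExtension τGF]
    (LHG : HoD ⥤ HoE') (τHG : γD ⋙ LHG ⟶ (G ⋙ H) ⋙ γE') [LHG.IsRightKanExtension τHG]
    (LHGF : HoC ⥤ HoE') (τHGF : γC ⋙ LHGF ⟶ (F ⋙ G ⋙ H) ⋙ γE')
    [LHGF.IsRightKanExtension τHGF]
    -- the canonical comparison transformations, each determined by its defining equation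
    (tdGF : LF ⋙ LG ⟶ LGF)
    (htdGF : Functor.whiskerLeft γC tdGF ≫ τGF = Functor.whiskerRight τF LG ≫ Functor.whiskerLeft F τG)
    (tdHG : LG ⋙ LH ⟶ LHG)
    (htdHG : Functor.whiskerLeft γD tdHG ≫ τHG = Functor.whiskerRight τG LH ≫ Functor.whiskerLeft G τH)
    (tdHG_F : LF ⋙ LHG ⟶ LHGF)
    (htdHG_F : Functor.whiskerLeft γC tdHG_F ≫ τHGF = Functor.whiskerRight τF LHG ≫ Functor.whiskerLeft F τHG)
    (tdH_GF : LGF ⋙ LH ⟶ LHGF)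
    (htdH_GF : Functor.whiskerLeft γC tdH_GF ≫ τHGF =
      Functor.whiskerRight τGF LH ≫ Functor.whiskerLeft (F ⋙ G) τH) :
    Functor.whiskerLeft LF tdHG ≫ tdHG_F = Functor.whiskerRight tdGF LH ≫ tdH_GF := by
  apply LHGF.hom_ext_of_isRightKanExtension τHGF
  ext X
  have h1 := NatTrans.congr_app htdGF X
  have h2 := NatTrans.congr_app htdHG (F.obj X)
  have h3 := NatTrans.congr_app htdHG_F X
  have h4 := NatTrans.congr_app htdH_GF X
  simp only [NatTrans.comp_app, Functor.whiskerLeft_app, Functor.whiskerRight_app, Functor.comp_obj] at h1 h2 h3 h4 ⊢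
  rw [Category.assoc, h3, Category.assoc, h4, ← Category.assoc (LH.map _),
    ← LH.map_comp, h1, LH.map_comp, Category.assoc, ← h2,
    ← Category.assoc, ← tdHG.naturality, Functor.comp_map, Category.assoc]
end

section
/- Let C be a model category with localization γ_C : C → Ho(C) at the class of weak equivalences, and let F : C → X be a functor that takes weak equivalences between cofibrant objects to isomorphisms. Then F admits a right Kan extension (L, τ) along γ_C, where L : Ho(C) → X and τ : L ∘ γ_C ⟹ F; moreover (i) the component τ_X : L(γ_C(X)) → F(X) is an isomorphism for every cofibrant object X of C, and (ii) every right Kan extension of F along γ_C is an absolute right Kan extension, i.e., it remains a right Kan extension after postcomposition with any functor out of X. -/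
open CategoryTheory Limits

universe v₁ v₂ v₃ v₄ u₁ u₂ u₃ u₄

/-- A (Quillen) model structure on a category: three classes of morphisms — weak
equivalences, cofibrations and fibrations — satisfying two-out-of-three, closure under
retracts, the lifting axioms and the factorization axioms.  (Together with the existence
of finite limits and colimits this is Quillen's notion of a model category.) -/
structure ModelStructure (C : Type u₁) [Category.{v₁} C] : Type (max u₁ v₁) where
  weq : MorphismProperty C
  cof : MorphismProperty C
  fib : MorphismProperty C
  weq_comp : ∀ {X Y Z : C} (f : X ⟶ Y) (g : Y ⟶ Z), weq f → weq g → weq (f ≫ g)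
  weq_of_comp_left : ∀ {X Y Z : C} (f : X ⟶ Y) (g : Y ⟶ Z), weq g → weq (f ≫ g) → weq f
  weq_of_comp_right : ∀ {X Y Z : C} (f : X ⟶ Y) (g : Y ⟶ Z), weq f → weq (f ≫ g) → weq g
  weq_retract : ∀ {X Y X' Y' : C} (f : X ⟶ Y) (f' : X' ⟶ Y') (s : X ⟶ X') (r : X' ⟶ X)
    (s' : Y ⟶ Y') (r' : Y' ⟶ Y), s ≫ r = 𝟙 X → s' ≫ r' = 𝟙 Y →
    s ≫ f' = f ≫ s' → f' ≫ r' = r ≫ f → weq f' → weq f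
  cof_retract : ∀ {X Y X' Y' : C} (f : X ⟶ Y) (f' : X' ⟶ Y') (s : X ⟶ X') (r : X' ⟶ X)
    (s' : Y ⟶ Y') (r' : Y' ⟶ Y), s ≫ r = 𝟙 X → s' ≫ r' = 𝟙 Y →
    s ≫ f' = f ≫ s' → f' ≫ r' = r ≫ f → cof f' → cof f
  fib_retract : ∀ {X Y X' Y' : C} (f : X ⟶ Y) (f' : X' ⟶ Y') (s : X ⟶ X') (r : X' ⟶ X)
    (s' : Y ⟶ Y') (r' : Y' ⟶ Y), s ≫ r = 𝟙 X → s' ≫ r' = 𝟙 Y →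
    s ≫ f' = f ≫ s' → f' ≫ r' = r ≫ f → fib f' → fib f
  lifting_cof_trivFib : ∀ {A B X Y : C} (i : A ⟶ B) (p : X ⟶ Y),
    cof i → fib p → weq p → HasLiftingProperty i p
  lifting_trivCof_fib : ∀ {A B X Y : C} (i : A ⟶ B) (p : X ⟶ Y),
    cof i → weq i → fib p → HasLiftingProperty i p
  factorization_cof_trivFib : ∀ {X Y : C} (f : X ⟶ Y),
    ∃ (Z : C) (i : X ⟶ Z) (p : Z ⟶ Y), cof i ∧ fib p ∧ weq p ∧ i ≫ p = f
  factorization_trivCof_fib : ∀ {X Y : C} (f : X ⟶ Y),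
    ∃ (Z : C) (i : X ⟶ Z) (p : Z ⟶ Y), cof i ∧ weq i ∧ fib p ∧ i ≫ p = f

/-- An object of a model category is cofibrant if the morphism from the initial object to
it is a cofibration. -/
def ModelStructure.IsCofibrant {C : Type u₁} [Category.{v₁} C] (M : ModelStructure C)
    [HasInitial C] (X : C) : Prop :=
  M.cof (initial.to X)

universe v₅ u₅

namespace QuillenAux8

open CategoryTheory Limits

variable {C : Type u₁} [Category.{v₁} C] (M : ModelStructure C)

lemma weq_id (X : C) : M.weq (𝟙 X) := by
  obtain ⟨Z, i, p, _, hiw, _, hfac⟩ := M.factorization_trivCof_fib (𝟙 X)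
  exact M.weq_retract (𝟙 X) i (𝟙 X) (𝟙 X) i p (Category.id_comp _) hfac
    rfl (by rw [hfac, Category.id_comp]) hiw

lemma cof_of_llp {A B : C} (f : A ⟶ B)
    (h : ∀ {E B' : C} (p : E ⟶ B'), M.fib p → M.weq p → HasLiftingProperty f p) :
    M.cof f := by
  obtain ⟨Z, i, p, hic, hpf, hpw, hfac⟩ := M.factorization_cof_trivFib f
  haveI := h p hpf hpw
  have sq : CommSq i f p (𝟙 B) := ⟨by rw [hfac, Category.comp_id]⟩
  exact M.cof_retract f i (𝟙 A) (𝟙 A) sq.lift p (Category.id_comp _) sq.fac_right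
    (by rw [Category.id_comp]; exact sq.fac_left.symm) (by rw [hfac, Category.id_comp]) hic

lemma cof_comp {A B D : C} (f : A ⟶ B) (g : B ⟶ D) (hf : M.cof f) (hg : M.cof g) :
    M.cof (f ≫ g) :=
  cof_of_llp M _ fun p hpf hpw => by
    haveI := M.lifting_cof_trivFib f p hf hpf hpw
    haveI := M.lifting_cof_trivFib g p hg hpf hpw
    infer_instance

variable [HasInitial C] [HasFiniteColimits C]

lemma cof_initial_coprod {A : C} (hA : M.IsCofibrant A) : M.cof (initial.to (A ⨿ A)) := by
  apply cof_of_llp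
  intro E B' p hpf hpw
  haveI := M.lifting_cof_trivFib (initial.to A) p hA hpf hpw
  constructor
  intro u g sq
  have sq1 : CommSq (initial.to E) (initial.to A) p (coprod.inl ≫ g) := ⟨initial.hom_ext _ _⟩
  have sq2 : CommSq (initial.to E) (initial.to A) p (coprod.inr ≫ g) := ⟨initial.hom_ext _ _⟩
  exact ⟨⟨⟨coprod.desc sq1.lift sq2.lift, initial.hom_ext _ _,
    coprod.hom_ext (by rw [coprod.inl_desc_assoc]; exact sq1.fac_right)
      (by rw [coprod.inr_desc_assoc]; exact sq2.fac_right)⟩⟩⟩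

/-- The key homotopy lemma: if `A` is cofibrant, `q` is a trivial fibration and
`u ≫ q = v ≫ q`, then `F` identifies `u` and `v`, provided `F` inverts weak equivalences
between cofibrant objects. -/
lemma map_eq {X : Type u₃} [Category.{v₃} X] (F : C ⥤ X)
    (hF : ∀ {A B : C} (f : A ⟶ B), M.IsCofibrant A → M.IsCofibrant B → M.weq f →
      IsIso (F.map f))
    {A B Y : C} (hA : M.IsCofibrant A) (u v : A ⟶ B) (q : B ⟶ Y)
    (hqf : M.fib q) (hqw : M.weq q) (h : u ≫ q = v ≫ q) : F.map u = F.map v := by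
  obtain ⟨Z, i, σ, hic, hσf, hσw, hfac⟩ :=
    M.factorization_cof_trivFib (coprod.desc (𝟙 A) (𝟙 A))
  have hZ : M.IsCofibrant Z := by
    show M.cof (initial.to Z)
    rw [initial.hom_ext (initial.to Z) (initial.to (A ⨿ A) ≫ i)]
    exact cof_comp M _ _ (cof_initial_coprod M hA) hic
  haveI hσ : IsIso (F.map σ) := hF σ hZ hA hσw
  have h0 : (coprod.inl ≫ i) ≫ σ = 𝟙 A := by rw [Category.assoc, hfac, coprod.inl_desc]
  have h1 : (coprod.inr ≫ i) ≫ σ = 𝟙 A := by rw [Category.assoc, hfac, coprod.inr_desc]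
  have hii : F.map (coprod.inl ≫ i) = F.map (coprod.inr ≫ i) := by
    rw [← cancel_mono (F.map σ), ← F.map_comp, ← F.map_comp, h0, h1]
  haveI := M.lifting_cof_trivFib i q hic hqf hqw
  have sq : CommSq (coprod.desc u v) i q (σ ≫ u ≫ q) := ⟨by
    rw [← Category.assoc, hfac]
    apply coprod.hom_ext <;> simp [h]⟩
  have hu : u = (coprod.inl ≫ i) ≫ sq.lift := by
    rw [Category.assoc, sq.fac_left, coprod.inl_desc]
  have hv : v = (coprod.inr ≫ i) ≫ sq.lift := by
    rw [Category.assoc, sq.fac_left, coprod.inr_desc]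
  calc F.map u = F.map ((coprod.inl ≫ i) ≫ sq.lift) := congrArg F.map hu
    _ = F.map ((coprod.inr ≫ i) ≫ sq.lift) := by
          rw [F.map_comp (coprod.inl ≫ i) sq.lift, F.map_comp (coprod.inr ≫ i) sq.lift, hii]
    _ = F.map v := (congrArg F.map hv).symm

/-- A cofibrant replacement of an object. -/
structure Repl (X : C) where
  Q : C
  p : Q ⟶ X
  cofQ : M.IsCofibrant Q
  fib_p : M.fib p
  weq_p : M.weq p

noncomputable def repl (X : C) : Repl M X :=
  have h := M.factorization_cof_trivFib (initial.to X)
  { Q := h.choose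
    p := h.choose_spec.choose_spec.choose
    cofQ := by
      have := h.choose_spec.choose_spec.choose_spec.1
      show M.cof (initial.to h.choose)
      rwa [initial.hom_ext (initial.to h.choose) h.choose_spec.choose]
    fib_p := h.choose_spec.choose_spec.choose_spec.2.1
    weq_p := h.choose_spec.choose_spec.choose_spec.2.2.1 }

noncomputable def Qo (X : C) : C := (repl M X).Q

noncomputable def pp (X : C) : Qo M X ⟶ X := (repl M X).p

lemma cof_Qo (X : C) : M.IsCofibrant (Qo M X) := (repl M X).cofQ

lemma fib_pp (X : C) : M.fib (pp M X) := (repl M X).fib_p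

lemma weq_pp (X : C) : M.weq (pp M X) := (repl M X).weq_p

lemma sqQ {X Y : C} (f : X ⟶ Y) :
    CommSq (initial.to (Qo M Y)) (initial.to (Qo M X)) (pp M Y) (pp M X ≫ f) :=
  ⟨initial.hom_ext _ _⟩

noncomputable def Qm {X Y : C} (f : X ⟶ Y) : Qo M X ⟶ Qo M Y :=
  haveI := M.lifting_cof_trivFib (initial.to (Qo M X)) (pp M Y) (cof_Qo M X)
    (fib_pp M Y) (weq_pp M Y)
  (sqQ M f).lift

lemma Qm_p {X Y : C} (f : X ⟶ Y) : Qm M f ≫ pp M Y = pp M X ≫ f :=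
  haveI := M.lifting_cof_trivFib (initial.to (Qo M X)) (pp M Y) (cof_Qo M X)
    (fib_pp M Y) (weq_pp M Y)
  (sqQ M f).fac_right

lemma weq_Qm {X Y : C} (f : X ⟶ Y) (hf : M.weq f) : M.weq (Qm M f) := by
  apply M.weq_of_comp_left (Qm M f) (pp M Y) (weq_pp M Y)
  rw [Qm_p]
  exact M.weq_comp _ _ (weq_pp M X) hf

variable {X : Type u₃} [Category.{v₃} X]

/-- The "derived" functor `A ↦ F (Q A)`. -/
noncomputable def Gf (F : C ⥤ X)
    (hF : ∀ {A B : C} (f : A ⟶ B), M.IsCofibrant A → M.IsCofibrant B → M.weq f →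
      IsIso (F.map f)) : C ⥤ X where
  obj A := F.obj (Qo M A)
  map f := F.map (Qm M f)
  map_id A := by
    rw [map_eq M F hF (cof_Qo M A) (Qm M (𝟙 A)) (𝟙 (Qo M A)) (pp M A) (fib_pp M A)
      (weq_pp M A) (by rw [Qm_p, Category.comp_id, Category.id_comp]), F.map_id]
  map_comp {A B D} f g := by
    rw [← F.map_comp]
    have e : (Qm M f ≫ Qm M g) ≫ pp M D = pp M A ≫ (f ≫ g) := by
      rw [Category.assoc, Qm_p, ← Category.assoc, Qm_p, Category.assoc]
    exact map_eq M F hF (cof_Qo M A) _ _ (pp M D) (fib_pp M D) (weq_pp M D)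
      ((Qm_p M (f ≫ g)).trans e.symm)

lemma Gf_inverts (F : C ⥤ X)
    (hF : ∀ {A B : C} (f : A ⟶ B), M.IsCofibrant A → M.IsCofibrant B → M.weq f →
      IsIso (F.map f)) : M.weq.IsInvertedBy (Gf M F hF) := fun _ _ f hf =>
  hF (Qm M f) (cof_Qo M _) (cof_Qo M _) (weq_Qm M f hf)

/-- The canonical natural transformation `F ∘ Q ⟶ F`. -/
noncomputable def kap (F : C ⥤ X)
    (hF : ∀ {A B : C} (f : A ⟶ B), M.IsCofibrant A → M.IsCofibrant B → M.weq f →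
      IsIso (F.map f)) : Gf M F hF ⟶ F where
  app A := F.map (pp M A)
  naturality {A B} f := by
    show F.map (Qm M f) ≫ F.map (pp M B) = F.map (pp M A) ≫ F.map f
    rw [← F.map_comp, ← F.map_comp, Qm_p]

/-- The abstract criterion: if `τ : γ ⋙ L ⟶ F` is invertible on a system of
"replacements", then `(L, τ)` is a right Kan extension of `F` along the localization
functor `γ`. -/
lemma isRKE {C : Type u₁} [Category.{v₁} C] {HoC : Type u₂} [Category.{v₂} HoC]
    (W : MorphismProperty C) (γ : C ⥤ HoC) [γ.IsLocalization W]
    (Q : C → C) (p : ∀ A, Q A ⟶ A) (hp : ∀ A, W (p A))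
    (Qm : ∀ {A B : C}, (A ⟶ B) → (Q A ⟶ Q B))
    (hQm : ∀ {A B : C} (f : A ⟶ B), Qm f ≫ p B = p A ≫ f)
    {Z : Type u₅} [Category.{v₅} Z] (L : HoC ⥤ Z) (Fz : C ⥤ Z) (τ : γ ⋙ L ⟶ Fz)
    (hτ : ∀ A, IsIso (τ.app (Q A))) : L.IsRightKanExtension τ := by
  haveI : ∀ A, IsIso (γ.map (p A)) := fun A => Localization.inverts γ W (p A) (hp A)
  haveI := hτ
  haveI : ((Functor.whiskeringLeft C HoC Z).obj γ).Full := Localization.full_whiskeringLeft γ W Z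
  have key : ∀ (Φ : HoC ⥤ Z) (κ : γ ⋙ Φ ⟶ Fz),
      ∃! η : Φ ⟶ L, Functor.whiskerLeft γ η ≫ τ = κ := by
    intro Φ κ
    let μ : γ ⋙ Φ ⟶ γ ⋙ L :=
      { app := fun A => inv (Φ.map (γ.map (p A))) ≫ κ.app (Q A) ≫ inv (τ.app (Q A)) ≫
          L.map (γ.map (p A))
        naturality := fun {A B} f => by
          have n1 := κ.naturality (Qm f)
          have n2 := τ.naturality (Qm f)
          simp only [Functor.comp_map] at n1 n2
          have e1 : Φ.map (γ.map f) ≫ inv (Φ.map (γ.map (p B))) =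
              inv (Φ.map (γ.map (p A))) ≫ Φ.map (γ.map (Qm f)) := by
            rw [← cancel_epi (Φ.map (γ.map (p A))), ← Category.assoc, ← Φ.map_comp,
              ← γ.map_comp, ← hQm, γ.map_comp, Φ.map_comp, Category.assoc,
              IsIso.hom_inv_id, Category.comp_id, IsIso.hom_inv_id_assoc]
          have e3 : inv (τ.app (Q A)) ≫ L.map (γ.map (Qm f)) =
              Fz.map (Qm f) ≫ inv (τ.app (Q B)) := by
            rw [← cancel_mono (τ.app (Q B)), Category.assoc, Category.assoc, n2,
              IsIso.inv_hom_id_assoc, IsIso.inv_hom_id, Category.comp_id]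
          have e4 : L.map (γ.map (p A)) ≫ L.map (γ.map f) =
              L.map (γ.map (Qm f)) ≫ L.map (γ.map (p B)) := by
            rw [← L.map_comp, ← L.map_comp, ← γ.map_comp, ← γ.map_comp, hQm]
          dsimp only [Functor.comp_obj, Functor.comp_map]
          simp only [Category.assoc]
          calc Φ.map (γ.map f) ≫ inv (Φ.map (γ.map (p B))) ≫ κ.app (Q B) ≫
                inv (τ.app (Q B)) ≫ L.map (γ.map (p B))
              = (Φ.map (γ.map f) ≫ inv (Φ.map (γ.map (p B)))) ≫ κ.app (Q B) ≫
                inv (τ.app (Q B)) ≫ L.map (γ.map (p B)) := by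
                simp only [Category.assoc]
            _ = inv (Φ.map (γ.map (p A))) ≫ (Φ.map (γ.map (Qm f)) ≫ κ.app (Q B)) ≫
                inv (τ.app (Q B)) ≫ L.map (γ.map (p B)) := by
                rw [e1]; simp only [Category.assoc]
            _ = inv (Φ.map (γ.map (p A))) ≫ κ.app (Q A) ≫ (Fz.map (Qm f) ≫
                inv (τ.app (Q B))) ≫ L.map (γ.map (p B)) := by
                rw [n1]; simp only [Category.assoc]
            _ = inv (Φ.map (γ.map (p A))) ≫ κ.app (Q A) ≫ inv (τ.app (Q A)) ≫
                L.map (γ.map (Qm f)) ≫ L.map (γ.map (p B)) := by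
                rw [← e3]; simp only [Category.assoc]
            _ = inv (Φ.map (γ.map (p A))) ≫ κ.app (Q A) ≫ inv (τ.app (Q A)) ≫
                L.map (γ.map (p A)) ≫ L.map (γ.map f) := by rw [e4] }
    have det : ∀ (η₀ : Φ ⟶ L), Functor.whiskerLeft γ η₀ ≫ τ = κ →
        ∀ A, η₀.app (γ.obj A) = μ.app A := by
      intro η₀ h₀ A
      have hQ : η₀.app (γ.obj (Q A)) ≫ τ.app (Q A) = κ.app (Q A) := by
        simpa using NatTrans.congr_app h₀ (Q A)
      have hnat := η₀.naturality (γ.map (p A))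
      have hQ' : η₀.app (γ.obj (Q A)) = κ.app (Q A) ≫ inv (τ.app (Q A)) := by
        rw [← hQ, Category.assoc, IsIso.hom_inv_id, Category.comp_id]
      show η₀.app (γ.obj A) = inv (Φ.map (γ.map (p A))) ≫ κ.app (Q A) ≫
        inv (τ.app (Q A)) ≫ L.map (γ.map (p A))
      rw [← cancel_epi (Φ.map (γ.map (p A))), hnat, hQ', IsIso.hom_inv_id_assoc,
        Category.assoc]
    obtain ⟨η, hη⟩ := ((Functor.whiskeringLeft C HoC Z).obj γ).map_surjective μ
    have hηapp : ∀ A, η.app (γ.obj A) = μ.app A := fun A => by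
      simpa using NatTrans.congr_app hη A
    have hprop : Functor.whiskerLeft γ η ≫ τ = κ := by
      ext A
      simp only [NatTrans.comp_app, Functor.whiskerLeft_app, hηapp A]
      have n2 := τ.naturality (p A)
      have n1 := κ.naturality (p A)
      simp only [Functor.comp_map] at n1 n2
      show (inv (Φ.map (γ.map (p A))) ≫ κ.app (Q A) ≫ inv (τ.app (Q A)) ≫
        L.map (γ.map (p A))) ≫ τ.app A = κ.app A
      simp only [Category.assoc, n2, IsIso.inv_hom_id_assoc]
      rw [← n1, IsIso.inv_hom_id_assoc]
    exact ⟨η, hprop, fun η' h' => Localization.natTrans_ext γ W (τ := η') (τ' := η)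
      (fun A => (det η' h' A).trans (det η hprop A).symm)⟩
  constructor
  constructor
  apply IsTerminal.ofUniqueHom
    (fun G => CostructuredArrow.homMk (key G.left G.hom).exists.choose
      (key G.left G.hom).exists.choose_spec)
  intro G m
  exact CostructuredArrow.hom_ext m _
    ((key G.left G.hom).unique (CostructuredArrow.w m)
      (key G.left G.hom).exists.choose_spec)

end QuillenAux8

/-- Quillen, Maltsiniotis.  Let `C` be a model category with
localization `γ : C ⥤ HoC` at the weak equivalences, and let `F : C ⥤ X` be a functor
taking weak equivalences between cofibrant objects to isomorphisms.  Then `F` admits a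
right Kan extension `(L, τ)` along `γ`; moreover (i) `τ` is an isomorphism at every
cofibrant object, and (ii) every right Kan extension of `F` along `γ` is an absolute right
Kan extension. -/
theorem exists_rightKanExtension_of_inverts_weq_between_cofibrant
    {C : Type u₁} [Category.{v₁} C] [HasFiniteLimits C] [HasFiniteColimits C]
    [HasInitial C] (M : ModelStructure C)
    {HoC : Type u₂} [Category.{v₂} HoC] (γ : C ⥤ HoC) [γ.IsLocalization M.weq]
    {X : Type u₃} [Category.{v₃} X] (F : C ⥤ X)
    (hF : ∀ {A B : C} (f : A ⟶ B), M.IsCofibrant A → M.IsCofibrant B → M.weq f →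
      IsIso (F.map f))
    {Y : Type u₄} [Category.{v₄} Y] :
    (∃ (L : HoC ⥤ X) (τ : γ ⋙ L ⟶ F), L.IsRightKanExtension τ ∧
      ∀ (A : C), M.IsCofibrant A → IsIso (τ.app A)) ∧
    (∀ (L : HoC ⥤ X) (τ : γ ⋙ L ⟶ F), L.IsRightKanExtension τ →
      ∀ (ψ : X ⥤ Y), (L ⋙ ψ).IsRightKanExtension
        ((Functor.whiskerRight τ ψ : γ ⋙ (L ⋙ ψ) ⟶ F ⋙ ψ))) := by
  classical
  have hG : M.weq.IsInvertedBy (QuillenAux8.Gf M F hF) := QuillenAux8.Gf_inverts M F hF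
  let L₀ : HoC ⥤ X := Localization.lift (QuillenAux8.Gf M F hF) hG γ
  let e : γ ⋙ L₀ ≅ QuillenAux8.Gf M F hF := Localization.fac _ hG γ
  let τ₀ : γ ⋙ L₀ ⟶ F := e.hom ≫ QuillenAux8.kap M F hF
  have hτ₀ : ∀ A : C, M.IsCofibrant A → IsIso (τ₀.app A) := by
    intro A hA
    haveI : IsIso ((QuillenAux8.kap M F hF).app A) :=
      hF (QuillenAux8.pp M A) (QuillenAux8.cof_Qo M A) hA (QuillenAux8.weq_pp M A)
    show IsIso (e.hom.app A ≫ (QuillenAux8.kap M F hF).app A)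
    infer_instance
  have hiso : ∀ A, IsIso (τ₀.app (QuillenAux8.Qo M A)) :=
    fun A => hτ₀ _ (QuillenAux8.cof_Qo M A)
  have hRKE : L₀.IsRightKanExtension τ₀ :=
    QuillenAux8.isRKE M.weq γ (QuillenAux8.Qo M) (QuillenAux8.pp M) (QuillenAux8.weq_pp M)
      (fun {A B} f => QuillenAux8.Qm M f) (fun {A B} f => QuillenAux8.Qm_p M f) L₀ F τ₀ hiso
  refine ⟨⟨L₀, τ₀, hRKE, hτ₀⟩, ?_⟩
  intro L τ hτ ψ
  haveI := hRKE
  haveI := hτ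
  let φ : L ⟶ L₀ := L₀.liftOfIsRightKanExtension τ₀ L τ
  have hφfac : Functor.whiskerLeft γ φ ≫ τ₀ = τ := L₀.liftOfIsRightKanExtension_fac τ₀ L τ
  haveI hφiso : IsIso φ :=
    (Functor.isRightKanExtension_iff_isIso φ τ₀ τ hφfac).mp hτ
  have hisoψ : ∀ A, IsIso ((Functor.whiskerRight τ₀ ψ : γ ⋙ (L₀ ⋙ ψ) ⟶ F ⋙ ψ).app
      (QuillenAux8.Qo M A)) := by
    intro A
    haveI := hiso A
    show IsIso (ψ.map (τ₀.app (QuillenAux8.Qo M A)))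
    infer_instance
  haveI hRKEψ : (L₀ ⋙ ψ).IsRightKanExtension (Functor.whiskerRight τ₀ ψ : γ ⋙ (L₀ ⋙ ψ) ⟶ F ⋙ ψ) :=
    QuillenAux8.isRKE M.weq γ (QuillenAux8.Qo M) (QuillenAux8.pp M) (QuillenAux8.weq_pp M)
      (fun {A B} f => QuillenAux8.Qm M f) (fun {A B} f => QuillenAux8.Qm_p M f)
      (L₀ ⋙ ψ) (F ⋙ ψ) (Functor.whiskerRight τ₀ ψ) hisoψ
  have comm : Functor.whiskerLeft γ (Functor.whiskerRight φ ψ) ≫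
      (Functor.whiskerRight τ₀ ψ : γ ⋙ (L₀ ⋙ ψ) ⟶ F ⋙ ψ) = Functor.whiskerRight τ ψ := by
    ext A
    show ψ.map (φ.app (γ.obj A)) ≫ ψ.map (τ₀.app A) = ψ.map (τ.app A)
    rw [← ψ.map_comp]
    congr 1
    simpa using NatTrans.congr_app hφfac A
  haveI : IsIso (Functor.whiskerRight φ ψ) :=
    inferInstanceAs (IsIso (((Functor.whiskeringRight HoC X Y).obj ψ).map φ))
  exact (Functor.isRightKanExtension_iff_isIso (Functor.whiskerRight φ ψ)
    (Functor.whiskerRight τ₀ ψ : γ ⋙ (L₀ ⋙ ψ) ⟶ F ⋙ ψ) (Functor.whiskerRight τ ψ) comm).mpr inferInstance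
end
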